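/- Let ξ and η be positive irrational real numbers and m a positive natural number with ξ·η = m. If the indices (n, k) with n ≥ 1 and k ≥ 1 are connected, i.e. p_{n−1}·P_{k−1} = m·q_{n−1}·Q_{k−1}, then n and k have different parity: (−1)^{k−1} = (−1)^n. -/

import Mathlib

/-!
The error `convErr ξ n = p_{n-1} - ξ q_{n-1}` has the sign of `(-1)^n`, since
`p_n - ξ q_n = -(p_{n-1} - ξ q_{n-1}) / ξ_{n+1}` with `ξ_{n+1} > 1`. If `(n, k)` is connected,
then `p_{n-1} P_{k-1} = ξ η q_{n-1} Q_{k-1}` rearranges to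
`P_{k-1} (p_{n-1} - ξ q_{n-1}) = -ξ q_{n-1} (P_{k-1} - η Q_{k-1})`; as `P_{k-1} ≥ 0` and
`ξ q_{n-1} > 0`, the two errors have opposite signs, so `n + k` is odd.
-/

/-- Complete quotients: `cq ξ 0 = ξ`, `cq ξ (n+1) = 1/(cq ξ n - ⌊cq ξ n⌋)`. -/
noncomputable def cq (ξ : ℝ) : ℕ → ℝ
  | 0 => ξ
  | n + 1 => 1 / (cq ξ n - ⌊cq ξ n⌋)

/-- Partial quotients: `pquot ξ n = b_n = ⌊ξ_n⌋`. -/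
noncomputable def pquot (ξ : ℝ) (n : ℕ) : ℤ := ⌊cq ξ n⌋

/-- Convergent numerators, shifted by one: `cnum ξ 0 = p_{-1} = 1`,
`cnum ξ 1 = p_0 = b_0`, and `cnum ξ (n+1) = p_n = b_n p_{n-1} + p_{n-2}`. -/
noncomputable def cnum (ξ : ℝ) : ℕ → ℤ
  | 0 => 1
  | 1 => pquot ξ 0
  | n + 2 => pquot ξ (n + 1) * cnum ξ (n + 1) + cnum ξ n

/-- Convergent denominators, shifted by one: `cden ξ 0 = q_{-1} = 0`,
`cden ξ 1 = q_0 = 1`, and `cden ξ (n+1) = q_n = b_n q_{n-1} + q_{n-2}`. -/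
noncomputable def cden (ξ : ℝ) : ℕ → ℤ
  | 0 => 0
  | 1 => 1
  | n + 2 => pquot ξ (n + 1) * cden ξ (n + 1) + cden ξ n

noncomputable def convErr (ξ : ℝ) (n : ℕ) : ℝ := cnum ξ n - ξ * cden ξ n

lemma cq_succ (ξ : ℝ) (n : ℕ) : cq ξ (n + 1) = (Int.fract (cq ξ n))⁻¹ := by
  rw [cq, one_div, Int.self_sub_floor]

lemma irrational_cq {ξ : ℝ} (h : Irrational ξ) : ∀ n, Irrational (cq ξ n)
  | 0 => h
  | n + 1 => by
    rw [cq_succ, Int.fract]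
    exact ((irrational_cq h n).sub_intCast _).inv

lemma fract_cq_pos {ξ : ℝ} (h : Irrational ξ) (n : ℕ) : 0 < Int.fract (cq ξ n) :=
  Int.fract_pos.mpr ((irrational_cq h n).ne_int _)

lemma cq_succ_mul_fract {ξ : ℝ} (h : Irrational ξ) (n : ℕ) :
    cq ξ (n + 1) * Int.fract (cq ξ n) = 1 := by
  rw [cq_succ, inv_mul_cancel₀ (fract_cq_pos h n).ne']

lemma one_lt_cq_succ {ξ : ℝ} (h : Irrational ξ) (n : ℕ) : 1 < cq ξ (n + 1) := by
  rw [cq_succ]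
  exact one_lt_inv₀ (fract_cq_pos h n) |>.mpr (Int.fract_lt_one _)

lemma pquot_succ_nonneg (ξ : ℝ) (n : ℕ) : 0 ≤ pquot ξ (n + 1) := by
  rw [pquot, Int.floor_nonneg, cq_succ]
  exact inv_nonneg.mpr (Int.fract_nonneg _)

lemma one_le_pquot_succ {ξ : ℝ} (h : Irrational ξ) (n : ℕ) : 1 ≤ pquot ξ (n + 1) :=
  Int.le_floor.mpr (by exact_mod_cast (one_lt_cq_succ h n).le)

lemma cnum_nonneg {ξ : ℝ} (hξ : 0 ≤ ξ) : ∀ n, 0 ≤ cnum ξ n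
  | 0 => zero_le_one
  | 1 => Int.floor_nonneg.mpr hξ
  | n + 2 => by
    have := pquot_succ_nonneg ξ n
    have := cnum_nonneg hξ n
    have := cnum_nonneg hξ (n + 1)
    rw [cnum]
    positivity

lemma cden_nonneg (ξ : ℝ) : ∀ n, 0 ≤ cden ξ n
  | 0 => le_rfl
  | 1 => zero_le_one
  | n + 2 => by
    have := pquot_succ_nonneg ξ n
    have := cden_nonneg ξ n
    have := cden_nonneg ξ (n + 1)
    rw [cden]
    positivity

lemma cden_succ_pos {ξ : ℝ} (h : Irrational ξ) : ∀ n, 0 < cden ξ (n + 1)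
  | 0 => one_pos
  | n + 1 => by
    have := one_le_pquot_succ h n
    have := cden_nonneg ξ n
    have := cden_succ_pos h n
    rw [cden]
    nlinarith

lemma convErr_add_two (ξ : ℝ) (n : ℕ) :
    convErr ξ (n + 2) = pquot ξ (n + 1) * convErr ξ (n + 1) + convErr ξ n := by
  simp only [convErr, cnum, cden]
  push_cast
  ring

lemma convErr_succ_mul_cq_succ {ξ : ℝ} (h : Irrational ξ) :
    ∀ n, convErr ξ (n + 1) * cq ξ (n + 1) = -convErr ξ n
  | 0 => by
    have hfract := cq_succ_mul_fract h 0
    rw [← Int.self_sub_floor] at hfract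
    simp only [convErr, cnum, cden, pquot, cq] at hfract ⊢
    push_cast
    linear_combination -hfract
  | n + 1 => by
    have hfract := cq_succ_mul_fract h (n + 1)
    rw [← Int.self_sub_floor] at hfract
    rw [convErr_add_two, pquot]
    linear_combination cq ξ (n + 2) * convErr_succ_mul_cq_succ h n
      - convErr ξ (n + 1) * hfract

lemma neg_one_pow_mul_convErr_pos {ξ : ℝ} (h : Irrational ξ) :
    ∀ n, 0 < (-1 : ℝ) ^ n * convErr ξ n
  | 0 => by simp [convErr, cnum, cden]
  | n + 1 => by
    have hcq := zero_lt_one.trans (one_lt_cq_succ h n)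
    have hrec : (-1 : ℝ) ^ (n + 1) * convErr ξ (n + 1) * cq ξ (n + 1)
        = (-1) ^ n * convErr ξ n := by
      rw [mul_assoc, convErr_succ_mul_cq_succ h, pow_succ]
      ring
    exact pos_of_mul_pos_left (hrec ▸ neg_one_pow_mul_convErr_pos h n) hcq.le

lemma odd_add_of_mul_eq_neg_mul {R : Type*} [CommRing R] [LinearOrder R] [IsStrictOrderedRing R]
    {n k : ℕ} {a c u v : R} (hu : 0 < (-1) ^ n * u) (hv : 0 < (-1) ^ k * v)
    (ha : 0 ≤ a) (hc : 0 < c) (h : a * u = -(c * v)) : Odd (n + k) := by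
  by_contra heven
  have hsign : (-1 : R) ^ n = (-1) ^ k := by
    rw [neg_one_pow_eq_pow_mod_two, neg_one_pow_eq_pow_mod_two (n := k)]
    congr 1
    rw [Nat.not_odd_iff_even, Nat.even_add, Nat.even_iff, Nat.even_iff] at heven
    omega
  have hprod : a * ((-1) ^ n * u) = -(c * ((-1) ^ k * v)) := by
    rw [hsign]
    linear_combination (-1 : R) ^ k * h
  nlinarith [mul_nonneg ha hu.le, mul_pos hc hv]

lemma neg_one_pow_sub_one_eq_of_odd_add {R : Type*} [Ring R] {n k : ℕ}
    (hk : 1 ≤ k) (h : Odd (n + k)) : (-1 : R) ^ (k - 1) = (-1) ^ n := by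
  rw [neg_one_pow_eq_pow_mod_two, neg_one_pow_eq_pow_mod_two (n := n)]
  obtain ⟨r, hr⟩ := h
  congr 1
  omega

theorem connected_different_parity_general
    (ξ η : ℝ) (m : ℕ) (hξpos : 0 < ξ) (hηpos : 0 < η)
    (hξirr : Irrational ξ) (hηirr : Irrational η)
    (hmul : ξ * η = m) (n k : ℕ) (hn : 1 ≤ n) (hk : 1 ≤ k)
    (hconn : cnum ξ n * cnum η k = (m : ℤ) * cden ξ n * cden η k) :
    (-1 : ℤ) ^ (k - 1) = (-1 : ℤ) ^ n := by
  have hconnR : (cnum ξ n : ℝ) * cnum η k = ξ * η * cden ξ n * cden η k := by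
    rw [hmul]
    exact_mod_cast hconn
  have hden : (0 : ℝ) < cden ξ n := by
    have := cden_succ_pos hξirr (n - 1)
    rw [Nat.sub_add_cancel hn] at this
    exact_mod_cast this
  refine neg_one_pow_sub_one_eq_of_odd_add hk <|
    odd_add_of_mul_eq_neg_mul (a := (cnum η k : ℝ)) (c := ξ * cden ξ n)
      (neg_one_pow_mul_convErr_pos hξirr n) (neg_one_pow_mul_convErr_pos hηirr k)
      (by exact_mod_cast cnum_nonneg hηpos.le k) (mul_pos hξpos hden) ?_
  simp only [convErr]
  linear_combination hconnR

/-- Lemma 2.5: if `(n, k)` is connected then `n` and `k` have different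
parity: `(-1)^(k-1) = (-1)^n`. -/
theorem connected_different_parity
    (ξ η : ℝ) (m : ℕ) (hξpos : 0 < ξ) (hηpos : 0 < η)
    (hξirr : Irrational ξ) (hηirr : Irrational η) (hm : 0 < m)
    (hmul : ξ * η = m) (n k : ℕ) (hn : 1 ≤ n) (hk : 1 ≤ k)
    (hconn : cnum ξ n * cnum η k = (m : ℤ) * cden ξ n * cden η k) :
    (-1 : ℤ) ^ (k - 1) = (-1 : ℤ) ^ n :=
  connected_different_parity_general ξ η m hξpos hηpos hξirr hηirr hmul n k hn hk hconn
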